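/- arXiv:1710.08027 — 2 statements merged into one kernel-verified Lean document; each statement's English description precedes it below -/
import Mathlib

section
/- There exists a constant C > 0 such that for every integer p ≥ 2, setting N = ⌈20·log_{8/7} p⌉, the binomial tail sum ∑_{j=0}^{N} 1[j > 19·log_{8/7} p] · C(N,j) · (1/4)^j · (3/4)^{N−j} is at most C·p^{−7}. (In words: if N independent trials each fail with probability 1/4, the probability that more than 19·log_{8/7} p of them fail is O(p^{−7}).) -/
/-!
Chernoff bound with tilt `3`: for `j > 19 L`, where `L = log_{8/7} p`, the term
`C(N,j) (1/4)^j (3/4)^(N-j)` is at most `3^(j - 19 L)` times itself, and summing the tilted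
terms by the binomial theorem gives `3^(-19 L) (3/2)^N ≤ 3/2 · (3^(-19) (3/2)^20)^L`.
Since `3^(-19) (3/2)^20 = 3 / 2^20 ≤ (8/7)^(-7)` and `p = (8/7)^L`, this is at most
`3/2 · p^(-7)`.
-/

open Finset Real

theorem binomial_tail_le_rpow_neg_mul_pow {a b θ : ℝ} (t : ℝ) (ha : 0 ≤ a) (hb : 0 ≤ b)
    (hθ : 1 ≤ θ) (N : ℕ) :
    ∑ j ∈ range (N + 1), (if t < j then (N.choose j : ℝ) * a ^ j * b ^ (N - j) else 0)
      ≤ θ ^ (-t) * (θ * a + b) ^ N := by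
  rw [add_pow, mul_sum]
  refine sum_le_sum fun j _ => ?_
  split_ifs with htj
  · have htilt : 1 ≤ θ ^ (-t) * θ ^ j := by
      rw [← rpow_natCast, ← rpow_add (by linarith)]
      exact one_le_rpow hθ (by linarith)
    calc (N.choose j : ℝ) * a ^ j * b ^ (N - j)
        ≤ (θ ^ (-t) * θ ^ j) * ((N.choose j : ℝ) * a ^ j * b ^ (N - j)) :=
          le_mul_of_one_le_left (by positivity) htilt
      _ = θ ^ (-t) * ((θ * a) ^ j * b ^ (N - j) * N.choose j) := by ring
  · have : 0 ≤ θ := by linarith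
    positivity

theorem pow_natCeil_le_rpow_add_one {x : ℝ} (hx : 1 ≤ x) {y : ℝ} (hy : 0 ≤ y) :
    x ^ ⌈y⌉₊ ≤ x ^ (y + 1) := by
  rw [← rpow_natCast]
  exact rpow_le_rpow_of_exponent_le hx (Nat.ceil_lt_add_one hy).le

theorem zpow_eq_rpow_logb {b x : ℝ} (hb : 0 < b) (hb1 : b ≠ 1) (hx : 0 < x) (k : ℤ) :
    x ^ k = (b ^ k) ^ logb b x := by
  conv_lhs => rw [← rpow_logb hb hb1 hx]
  rw [← rpow_intCast, ← rpow_intCast, ← rpow_mul hb.le, ← rpow_mul hb.le, mul_comm]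

/-- There exists a constant `C > 0` such that for every integer `p ≥ 2`, setting
`N = ⌈20·log_{8/7} p⌉`, the binomial tail sum
`∑_{j=0}^{N} 1[j > 19·log_{8/7} p] · C(N,j) · (1/4)^j · (3/4)^(N−j)`
is at most `C·p^(−7)`. -/
theorem stmt_0 :
    ∃ C : ℝ, 0 < C ∧ ∀ p : ℕ, 2 ≤ p →
      (∑ j ∈ Finset.range (⌈20 * Real.logb (8/7) p⌉₊ + 1),
        (if 19 * Real.logb (8/7) p < (j : ℝ) then
          ((⌈20 * Real.logb (8/7) p⌉₊).choose j : ℝ) * (1/4 : ℝ) ^ j *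
            (3/4 : ℝ) ^ (⌈20 * Real.logb (8/7) p⌉₊ - j)
        else 0))
      ≤ C * (p : ℝ) ^ (-7 : ℤ) := by
  refine ⟨3 / 2, by norm_num, fun p hp => ?_⟩
  have hp_pos : (0 : ℝ) < p := by positivity
  set L := logb (8 / 7) (p : ℝ)
  have hL : 0 ≤ L := logb_nonneg (by norm_num) (by exact_mod_cast (by omega : 1 ≤ p))
  calc _ ≤ (3 : ℝ) ^ (-(19 * L)) * (3 * (1 / 4) + 3 / 4) ^ ⌈20 * L⌉₊ :=
        binomial_tail_le_rpow_neg_mul_pow _ (by norm_num) (by norm_num) (by norm_num) _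
    _ ≤ (3 : ℝ) ^ (-(19 * L)) * (3 / 2) ^ (20 * L + 1) := by
        norm_num only
        gcongr
        exact pow_natCeil_le_rpow_add_one (by norm_num) (by positivity)
    _ = 3 / 2 * ((3 : ℝ) ^ (-19 : ℤ) * (3 / 2) ^ (20 : ℤ)) ^ L := by
        rw [mul_rpow (by positivity) (by positivity), ← rpow_intCast, ← rpow_intCast,
          ← rpow_mul (by norm_num), ← rpow_mul (by norm_num), rpow_add_one (by norm_num)]
        push_cast
        ring_nf
    _ ≤ 3 / 2 * ((8 / 7 : ℝ) ^ (-7 : ℤ)) ^ L := by gcongr; norm_num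
    _ = 3 / 2 * (p : ℝ) ^ (-7 : ℤ) := by
        rw [zpow_eq_rpow_logb (b := 8 / 7) (by norm_num) (by norm_num) hp_pos]
end

section
/- There exists a constant C > 0 such that for every integer p ≥ 2, every probability space (Ω, μ), and every family of ℕ-valued random variables X_1, …, X_p on Ω, each of whose distribution (pushforward law under μ) is the binomial distribution with N = ⌈20·log_{8/7} p⌉ trials and success probability 1/4, the probability μ({ω : ∃ i ∈ {1,…,p}, X_i(ω) > 19·log_{8/7} p}) is at most C·p^{−6}. -/
open MeasureTheory

/-!
Each `X i` has pmf `C(N, j) 4⁻ʲ (3/4)^(N-j) ≤ 2ᴺ 4⁻ʲ`, so summing a geometric series gives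
`P(X i ≥ k) ≤ (4/3) 2ᴺ 4⁻ᵏ`. With `L = log_{8/7} p`, `N ≤ 20L + 1` and `k = ⌈19L⌉` this is at most
`(8/3) (2²⁰ 4⁻¹⁹)ᴸ = (8/3) 2^(-18L) ≤ (8/3) p⁻⁷`, since `(8/7)⁷ ≤ 2¹⁸`; the union bound over the
`p` variables costs a factor `p`.
-/

theorem measure_le_le_of_map_singleton_le_geometric {Ω : Type*} [MeasurableSpace Ω]
    {μ : Measure Ω} {X : Ω → ℕ} (hX : Measurable X) {a r : ℝ} (ha : 0 ≤ a) (hr₀ : 0 ≤ r)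
    (hr₁ : r < 1) (h : ∀ j, μ.map X {j} ≤ ENNReal.ofReal (a * r ^ j)) (k : ℕ) :
    μ {ω | k ≤ X ω} ≤ ENNReal.ofReal (a * r ^ k / (1 - r)) := by
  have hcover : Set.Ici k ⊆ ⋃ m : ℕ, {k + m} := fun n (hn : k ≤ n) =>
    Set.mem_iUnion.mpr ⟨n - k, by simp [Nat.add_sub_cancel' hn]⟩
  have hsum : HasSum (fun m : ℕ => a * r ^ k * r ^ m) (a * r ^ k / (1 - r)) := by
    simpa [div_eq_mul_inv] using (hasSum_geometric_of_lt_one hr₀ hr₁).mul_left (a * r ^ k)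
  calc μ {ω | k ≤ X ω} = μ.map X (Set.Ici k) := (Measure.map_apply hX trivial).symm
    _ ≤ ∑' m : ℕ, μ.map X {k + m} := (measure_mono hcover).trans (measure_iUnion_le _)
    _ ≤ ∑' m : ℕ, ENNReal.ofReal (a * r ^ k * r ^ m) :=
        ENNReal.tsum_le_tsum fun m => by simpa [pow_add, mul_assoc] using h (k + m)
    _ = ENNReal.ofReal (a * r ^ k / (1 - r)) := by
        rw [← ENNReal.ofReal_tsum_of_nonneg (fun m => by positivity) hsum.summable, hsum.tsum_eq]

theorem choose_mul_pow_mul_pow_le_two_pow_mul_pow (N j : ℕ) {q : ℝ} (hq₀ : 0 ≤ q) (hq₁ : q ≤ 1) :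
    (N.choose j : ℝ) * q ^ j * (1 - q) ^ (N - j) ≤ 2 ^ N * q ^ j := by
  have hchoose : (N.choose j : ℝ) ≤ 2 ^ N := by exact_mod_cast N.choose_le_two_pow j
  calc (N.choose j : ℝ) * q ^ j * (1 - q) ^ (N - j) ≤ (N.choose j : ℝ) * q ^ j :=
        mul_le_of_le_one_right (by positivity) (pow_le_one₀ (by linarith) (by linarith))
    _ ≤ 2 ^ N * q ^ j := by gcongr

theorem measure_le_le_of_map_eq_binomial {Ω : Type*} [MeasurableSpace Ω] {μ : Measure Ω}
    {X : Ω → ℕ} (hX : Measurable X) {N : ℕ} {q : ℝ} (hq₀ : 0 ≤ q) (hq₁ : q < 1)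
    (hlaw : ∀ j, μ.map X {j} = ENNReal.ofReal ((N.choose j : ℝ) * q ^ j * (1 - q) ^ (N - j)))
    (k : ℕ) :
    μ {ω | k ≤ X ω} ≤ ENNReal.ofReal (2 ^ N * q ^ k / (1 - q)) :=
  measure_le_le_of_map_singleton_le_geometric hX (by positivity) hq₀ hq₁
    (fun j => (hlaw j).trans_le <| ENNReal.ofReal_le_ofReal <|
      choose_mul_pow_mul_pow_le_two_pow_mul_pow N j hq₀ hq₁.le) k

theorem pow_seven_mul_two_pow_mul_quarter_pow_le {p : ℝ} (hp : 1 ≤ p) :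
    p ^ 7 * 2 ^ ⌈20 * Real.logb (8/7) p⌉₊ * (1/4 : ℝ) ^ ⌈19 * Real.logb (8/7) p⌉₊ ≤ 2 := by
  set L := Real.logb (8/7) p
  have hL : 0 ≤ L := Real.logb_nonneg (by norm_num) hp
  have hp7 : p ^ 7 = ((8/7 : ℝ) ^ 7) ^ L := by
    rw [← Real.rpow_pow_comm (by norm_num),
      Real.rpow_logb (by norm_num) (by norm_num) (by linarith)]
  have htwo : (2 : ℝ) ^ ⌈20 * L⌉₊ ≤ 2 * ((2 : ℝ) ^ 20) ^ L := by
    rw [← Real.rpow_natCast, ← Real.rpow_natCast_mul (by norm_num), mul_comm 2,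
      ← Real.rpow_add_one (by norm_num)]
    exact Real.rpow_le_rpow_of_exponent_le (by norm_num) (Nat.ceil_lt_add_one (by positivity)).le
  have hquarter : (1/4 : ℝ) ^ ⌈19 * L⌉₊ ≤ ((1/4 : ℝ) ^ 19) ^ L := by
    rw [← Real.rpow_natCast, ← Real.rpow_natCast_mul (by norm_num)]
    exact Real.rpow_le_rpow_of_exponent_ge (by norm_num) (by norm_num)
      (by push_cast; exact Nat.le_ceil _)
  calc p ^ 7 * 2 ^ ⌈20 * L⌉₊ * (1/4 : ℝ) ^ ⌈19 * L⌉₊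
      ≤ ((8/7 : ℝ) ^ 7) ^ L * (2 * ((2 : ℝ) ^ 20) ^ L) * ((1/4 : ℝ) ^ 19) ^ L := by
        rw [hp7]; gcongr
    _ = 2 * ((8/7 : ℝ) ^ 7 * 2 ^ 20 * (1/4) ^ 19) ^ L := by
        rw [Real.mul_rpow (by norm_num) (by norm_num), Real.mul_rpow (by norm_num) (by norm_num)]
        ring
    _ ≤ 2 * 1 := by gcongr; exact Real.rpow_le_one (by norm_num) (by norm_num) hL
    _ = 2 := mul_one 2

/-- There exists a constant `C > 0` such that for every integer `p ≥ 2`, every probability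
space `(Ω, μ)`, and every family of `ℕ`-valued random variables `X_1, …, X_p` on `Ω`, each of
whose distribution (pushforward law under `μ`) is the binomial distribution with
`N = ⌈20·log_{8/7} p⌉` trials and success probability `1/4`, the probability
`μ {ω | ∃ i, X i ω > 19·log_{8/7} p}` is at most `C·p^(−6)`. -/
theorem stmt_1 :
    ∃ C : ℝ, 0 < C ∧ ∀ p : ℕ, 2 ≤ p →
      ∀ (Ω : Type) (_ : MeasurableSpace Ω) (μ : Measure Ω), IsProbabilityMeasure μ →
      ∀ X : Fin p → Ω → ℕ, (∀ i, Measurable (X i)) →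
      (∀ i (j : ℕ), μ.map (X i) {j} =
        ENNReal.ofReal
          (((⌈20 * Real.logb (8/7) p⌉₊).choose j : ℝ) * (1/4 : ℝ) ^ j *
            (3/4 : ℝ) ^ (⌈20 * Real.logb (8/7) p⌉₊ - j))) →
      μ {ω | ∃ i : Fin p, 19 * Real.logb (8/7) p < (X i ω : ℝ)}
        ≤ ENNReal.ofReal (C * (p : ℝ) ^ (-6 : ℤ)) := by
  refine ⟨8/3, by norm_num, fun p hp Ω _ μ _ X hX hlaw => ?_⟩
  set L := Real.logb (8/7) (p : ℝ)
  set tail : ℝ := 2 ^ ⌈20 * L⌉₊ * (1/4) ^ ⌈19 * L⌉₊ / (1 - 1/4)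
  have htail (i : Fin p) : μ {ω | 19 * L < (X i ω : ℝ)} ≤ ENNReal.ofReal tail :=
    (measure_mono fun ω (hω : 19 * L < (X i ω : ℝ)) => Nat.ceil_le.mpr hω.le).trans
      (measure_le_le_of_map_eq_binomial (hX i) (by norm_num) (by norm_num)
        (fun j => (hlaw i j).trans (by norm_num)) _)
  have hp₀ : (0 : ℝ) < p := by positivity
  have hbound : (p : ℝ) * tail ≤ 8/3 * (p : ℝ) ^ (-6 : ℤ) := by
    rw [zpow_neg, zpow_ofNat, le_mul_inv_iff₀ (by positivity)]
    calc (p : ℝ) * tail * p ^ 6 = 4/3 * (p ^ 7 * 2 ^ ⌈20 * L⌉₊ * (1/4) ^ ⌈19 * L⌉₊) := by ring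
      _ ≤ 4/3 * 2 := by
        gcongr
        exact pow_seven_mul_two_pow_mul_quarter_pow_le (by exact_mod_cast (by omega : 1 ≤ p))
      _ = 8/3 := by norm_num
  calc μ {ω | ∃ i : Fin p, 19 * L < (X i ω : ℝ)}
      ≤ ∑ i, μ {ω | 19 * L < (X i ω : ℝ)} := by
        rw [Set.ofPred_exists]; exact measure_iUnion_fintype_le μ _
    _ ≤ ∑ _i : Fin p, ENNReal.ofReal tail := Finset.sum_le_sum fun i _ => htail i
    _ = ENNReal.ofReal (p * tail) := by
        rw [Finset.sum_const, Finset.card_univ, Fintype.card_fin, nsmul_eq_mul,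
          ENNReal.ofReal_mul hp₀.le, ENNReal.ofReal_natCast]
    _ ≤ ENNReal.ofReal (8/3 * (p : ℝ) ^ (-6 : ℤ)) := ENNReal.ofReal_le_ofReal hbound
end
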